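/- The 4×4 symmetric matrix J₃,₁ = 2·[[2,0,0,−1],[0,2,0,1],[0,0,4,2],[−1,1,2,2]] is positive semidefinite of rank 3, and its minimum value kᵀJ₃,₁k over nonzero k ∈ ℤ³ × {−1,0,1} equals 4. -/

import Mathlib

/-!
Completing squares gives `xᵀJ₃,₁x = (2x₀ - x₃)² + (2x₁ + x₃)² + 2(2x₂ + x₃)²`, so `J₃,₁` is
positive semidefinite, and its kernel is the line through `(1, -1, -1, 2)`, so its rank is 3.
On integer vectors with `l = ±1` the three bracketed terms are odd, so the form is at least
`1 + 1 + 2 = 4`; with `l = 0` it is `4(n₀² + n₁² + 2n₂²) ≥ 4`. The value 4 is attained at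
`k = (0, 0, 0, 1)`.
-/

open Matrix

/-- The form `J₃,₁ = 2·[[2,0,0,−1],[0,2,0,1],[0,0,4,2],[−1,1,2,2]]`. -/
noncomputable def J31 : Matrix (Fin 4) (Fin 4) ℝ :=
  (2 : ℝ) • !![2, 0, 0, -1;
               0, 2, 0, 1;
               0, 0, 4, 2;
               -1, 1, 2, 2]

lemma J31_dotProduct_mulVec (x : Fin 4 → ℝ) :
    x ⬝ᵥ J31 *ᵥ x = (2 * x 0 - x 3) ^ 2 + (2 * x 1 + x 3) ^ 2 + 2 * (2 * x 2 + x 3) ^ 2 := by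
  simp [J31, mulVec, dotProduct, Fin.sum_univ_four]
  ring

lemma J31_isHermitian : J31.IsHermitian := by
  ext i j
  fin_cases i <;> fin_cases j <;> simp [J31]

lemma J31_posSemidef : J31.PosSemidef :=
  posSemidef_iff_dotProduct_mulVec.2 ⟨J31_isHermitian, fun x => by
    rw [star_trivial, J31_dotProduct_mulVec]; positivity⟩

lemma ker_J31_mulVecLin : LinearMap.ker J31.mulVecLin = ℝ ∙ ![1, -1, -1, 2] := by
  ext x
  simp only [LinearMap.mem_ker, Submodule.mem_span_singleton, mulVecLin_apply]
  constructor
  · intro h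
    have h0 := congrFun h 0
    have h1 := congrFun h 1
    have h2 := congrFun h 2
    simp [J31, mulVec, dotProduct, Fin.sum_univ_four] at h0 h1 h2
    refine ⟨x 0, funext fun i => ?_⟩
    fin_cases i <;> simp <;> linarith
  · rintro ⟨a, rfl⟩
    funext i
    fin_cases i <;> simp [J31, mulVec, dotProduct, Fin.sum_univ_four] <;> ring

lemma J31_rank : J31.rank = 3 := by
  have h := LinearMap.finrank_range_add_finrank_ker J31.mulVecLin
  rw [ker_J31_mulVecLin, finrank_span_singleton (by simp [funext_iff, Fin.forall_fin_succ])] at h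
  simp only [Module.finrank_fin_fun] at h
  rw [Matrix.rank]
  omega

lemma Int.one_le_sq_of_odd {x : ℤ} (hx : Odd x) : 1 ≤ x ^ 2 :=
  (one_le_sq_iff_one_le_abs x).2 (Int.one_le_abs (by rintro rfl; simp at hx))

lemma four_le_of_odd {a b c l : ℤ} (hl : Odd l) :
    4 ≤ (2 * a - l) ^ 2 + (2 * b + l) ^ 2 + 2 * (2 * c + l) ^ 2 := by
  have ha := Int.one_le_sq_of_odd ((even_two_mul a).sub_odd hl)
  have hb := Int.one_le_sq_of_odd ((even_two_mul b).add_odd hl)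
  have hc := Int.one_le_sq_of_odd ((even_two_mul c).add_odd hl)
  linarith

lemma four_le_of_ne_zero {a b c : ℤ} (h : a ≠ 0 ∨ b ≠ 0 ∨ c ≠ 0) :
    4 ≤ (2 * a) ^ 2 + (2 * b) ^ 2 + 2 * (2 * c) ^ 2 := by
  rcases h with h | h | h <;>
    nlinarith [(one_le_sq_iff_one_le_abs _).2 (Int.one_le_abs h),
      sq_nonneg a, sq_nonneg b, sq_nonneg c]

lemma Fin.snoc_eq_vecCons_four {α : Type*} (f : Fin 3 → α) (a : α) :
    (Fin.snoc f a : Fin 4 → α) = ![f 0, f 1, f 2, a] := by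
  ext i; fin_cases i <;> rfl

lemma snoc_dotProduct_J31_mulVec (n : Fin 3 → ℤ) (l : ℤ) :
    (Fin.snoc (fun i => (n i : ℝ)) (l : ℝ) : Fin 4 → ℝ) ⬝ᵥ
        J31 *ᵥ Fin.snoc (fun i => (n i : ℝ)) (l : ℝ) =
      (((2 * n 0 - l) ^ 2 + (2 * n 1 + l) ^ 2 + 2 * (2 * n 2 + l) ^ 2 : ℤ) : ℝ) := by
  rw [Fin.snoc_eq_vecCons_four, J31_dotProduct_mulVec]
  push_cast
  rfl

/-- `J₃,₁` is positive semidefinite of rank 3, and its minimum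
value `kᵀJ₃,₁k` over nonzero `k ∈ ℤ³ × {−1,0,1}` equals `4`. -/
theorem stmt_19 :
    J31.PosSemidef ∧ J31.rank = 3 ∧
    IsLeast {v : ℝ | ∃ (n : Fin 3 → ℤ) (l : ℤ), l ∈ ({-1, 0, 1} : Set ℤ) ∧
      (n ≠ 0 ∨ l ≠ 0) ∧
      v = (Fin.snoc (fun i => (n i : ℝ)) (l : ℝ) : Fin 4 → ℝ) ⬝ᵥ
        J31.mulVec (Fin.snoc (fun i => (n i : ℝ)) (l : ℝ))} 4 := by
  refine ⟨J31_posSemidef, J31_rank, ⟨0, 1, by simp, by simp, ?_⟩, ?_⟩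
  · rw [snoc_dotProduct_J31_mulVec]
    norm_num
  rintro v ⟨n, l, hl, hnl, rfl⟩
  rw [snoc_dotProduct_J31_mulVec]
  exact_mod_cast show (4 : ℤ) ≤ _ by
    rcases hl with rfl | rfl | rfl
    · exact four_le_of_odd (by decide)
    · have hn : n 0 ≠ 0 ∨ n 1 ≠ 0 ∨ n 2 ≠ 0 := by
        simpa [funext_iff, Fin.forall_fin_succ, or_iff_not_imp_left] using hnl
      simpa using four_le_of_ne_zero hn
    · exact four_le_of_odd (by decide)
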